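/- Let G and H be finite abelian groups, let d = |G| and m = |H| + 1, and let f : G → H be differentially 1-uniform. For each complex-valued additive character ψ of H, define vectors v_{ψ,χ} ∈ ℂ^G (one for each additive character χ of G) by v_{ψ,χ}(x) = χ(x)·ψ(f(x))/√d for x ∈ G. Then: (i) for each ψ, the set B_ψ = {v_{ψ,χ} : χ an additive character of G} is an orthonormal basis of ℂ^G; and (ii) the family consisting of the standard basis B_0 = {δ_x : x ∈ G} with weight w_0 = 1/(d(d+1)), together with the |H| bases B_ψ each with weight w_ψ = 1/(|H|(d+1)), forms a weighted 2-design: the sum of w_a w_b |⟨u, v⟩|^4 over all ordered pairs of design elements u ∈ B_a, v ∈ B_b (a, b ranging over {0} ∪ {characters of H}) equals 2/(d(d+1)). -/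

import Mathlib

/-- A function `f : G → H` between additive groups is differentially 1-uniform if for
every `(a, b) ≠ (0, 0)` the equation `f (x + a) - f x = b` has at most one solution. -/
def DiffOneUniform {G H : Type*} [AddGroup G] [AddGroup H] (f : G → H) : Prop :=
  ∀ a : G, ∀ b : H, ¬(a = 0 ∧ b = 0) →
    ∀ x y : G, f (x + a) - f x = b → f (y + a) - f y = b → x = y

/-- The vector `v_{ψ,χ} ∈ ℂ^G` with entries `v_{ψ,χ}(x) = χ(x)·ψ(f(x))/√|G|`. -/
noncomputable def charVec {G H : Type*} [AddCommGroup G] [Fintype G] [AddCommGroup H]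
    (f : G → H) (ψ : AddChar H ℂ) (χ : AddChar G ℂ) : EuclideanSpace ℂ G :=
  (WithLp.equiv 2 (G → ℂ)).symm fun x =>
    χ x * ψ (f x) / (Real.sqrt (Fintype.card G) : ℂ)

/-!
With `S(ψ, χ) = ∑ₓ χ(x) ψ(f x)` one has `⟨v_{ψ,χ}, v_{ψ',χ'}⟩ = S(ψ' - ψ, χ' - χ) / d`, so (i) is
orthogonality of the characters of `G`, and (ii) reduces to the fourth moment
`∑_{ψ,χ} |S(ψ,χ)|⁴ = d² |H| (2d - 1)`. Now `|S(ψ,χ)|²` is the character transform of the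
autocorrelation `A_ψ(a) = ∑ₓ ψ(f(x+a) - f x)`, so by Parseval the fourth moment equals
`d ∑_a ∑_ψ |A_ψ(a)|²`. Here `A_ψ(0) = d`, while for `a ≠ 0` differential 1-uniformity makes
`x ↦ f(x+a) - f x` injective, and orthogonality of the characters of `H` gives
`∑_ψ |A_ψ(a)|² = |H| d`.
-/

open Finset ComplexConjugate

theorem Orthonormal.sum_sum_norm_inner_pow {𝕜 E ι : Type*} [RCLike 𝕜] [SeminormedAddCommGroup E]
    [InnerProductSpace 𝕜 E] [Fintype ι] {v : ι → E} (hv : Orthonormal 𝕜 v) {n : ℕ} (hn : n ≠ 0) :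
    ∑ i, ∑ j, ‖inner 𝕜 (v i) (v j)‖ ^ n = Fintype.card ι := by
  classical
  simp [orthonormal_iff_ite.mp hv, apply_ite (‖·‖ ^ n), hn]

section CharacterSums

variable {G : Type*} [AddCommGroup G] [Fintype G]

theorem sum_addChar_mul_conj_sum_addChar [DecidableEq G] {ι : Type*} [Fintype ι] (h : ι → G)
    (c : ι → ℂ) :
    ∑ χ : AddChar G ℂ, (∑ i, χ (h i) * c i) * conj (∑ i, χ (h i) * c i)
      = Fintype.card G * ∑ i, ∑ j, if h i = h j then c i * conj (c j) else 0 := by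
  have hχ : ∀ (χ : AddChar G ℂ) i j,
      χ (h i) * c i * conj (χ (h j) * c j) = χ (h i - h j) * (c i * conj (c j)) := by
    intro χ i j
    rw [map_mul, ← AddChar.map_neg_eq_conj, sub_eq_add_neg, AddChar.map_add_eq_mul]
    ring
  simp_rw [sum_mul, mul_sum, map_sum, mul_sum, hχ]
  rw [sum_comm]
  refine sum_congr rfl fun i _ => ?_
  rw [sum_comm]
  refine sum_congr rfl fun j _ => ?_
  rw [← sum_mul, AddChar.sum_apply_eq_ite]
  simp [sub_eq_zero]

theorem sum_norm_sq_sum_addChar_mul (c : G → ℂ) :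
    ∑ χ : AddChar G ℂ, ‖∑ x, χ x * c x‖ ^ 2 = Fintype.card G * ∑ x, ‖c x‖ ^ 2 := by
  classical
  apply Complex.ofReal_injective
  push_cast
  simp_rw [← Complex.mul_conj']
  simpa using sum_addChar_mul_conj_sum_addChar id c

theorem sum_norm_sq_sum_addChar_comp_of_injective {ι : Type*} [Fintype ι] {h : ι → G}
    (hh : Function.Injective h) :
    ∑ χ : AddChar G ℂ, ‖∑ i, χ (h i)‖ ^ 2 = Fintype.card G * Fintype.card ι := by
  classical
  apply Complex.ofReal_injective
  push_cast
  simpa [← Complex.mul_conj', hh.eq_iff] using sum_addChar_mul_conj_sum_addChar h 1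

theorem sum_addChar_mul_mul_conj (g : G → ℂ) (χ : AddChar G ℂ) :
    (∑ x, χ x * g x) * conj (∑ x, χ x * g x)
      = ∑ a, χ a * ∑ x, g (x + a) * conj (g x) := by
  have hχ : ∀ y a, χ (y + a) * g (y + a) * conj (χ y * g y) = χ a * (g (y + a) * conj (g y)) := by
    intro y a
    have hy : χ y * conj (χ y) = 1 := by
      rw [← AddChar.map_neg_eq_conj, ← AddChar.map_add_eq_mul, add_neg_cancel,
        AddChar.map_zero_eq_one]
    rw [map_mul, AddChar.map_add_eq_mul]
    linear_combination χ a * g (y + a) * conj (g y) * hy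
  calc (∑ x, χ x * g x) * conj (∑ x, χ x * g x)
      = ∑ y, ∑ x, χ x * g x * conj (χ y * g y) := by rw [map_sum, sum_mul_sum, sum_comm]
    _ = ∑ y, ∑ a, χ (y + a) * g (y + a) * conj (χ y * g y) :=
        sum_congr rfl fun y _ => (Equiv.sum_comp (Equiv.addLeft y) _).symm
    _ = ∑ a, χ a * ∑ x, g (x + a) * conj (g x) := by simp_rw [hχ, mul_sum]; exact sum_comm

theorem sum_sum_comp_sub {M : Type*} [AddCommMonoid M] (F : G → M) :
    ∑ x, ∑ y, F (y - x) = Fintype.card G • ∑ z, F z := by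
  calc ∑ x, ∑ y, F (y - x) = ∑ _x : G, ∑ z, F z :=
        sum_congr rfl fun x _ => Equiv.sum_comp (Equiv.subRight x) F
    _ = Fintype.card G • ∑ z, F z := by rw [sum_const, card_univ]

end CharacterSums

section DifferentialUniformity

variable {G H : Type*} [AddCommGroup G] [AddCommGroup H]

theorem DiffOneUniform.injective_sub_comp_add {f : G → H} (hf : DiffOneUniform f) {a : G}
    (ha : a ≠ 0) : Function.Injective fun x => f (x + a) - f x :=
  fun x y hxy => hf a _ (fun h => ha h.1) x y rfl hxy.symm

variable [Fintype G]

noncomputable def charSum (f : G → H) (ψ : AddChar H ℂ) (χ : AddChar G ℂ) : ℂ :=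
  ∑ x, χ x * ψ (f x)

variable [Fintype H]

theorem charSum_mul_conj (f : G → H) (ψ : AddChar H ℂ) (χ : AddChar G ℂ) :
    charSum f ψ χ * conj (charSum f ψ χ) = ∑ a, χ a * ∑ x, ψ (f (x + a) - f x) := by
  simp_rw [charSum, sum_addChar_mul_mul_conj, ← AddChar.map_neg_eq_conj, ← AddChar.map_add_eq_mul,
    ← sub_eq_add_neg]

theorem sum_norm_pow_four_charSum (f : G → H) (ψ : AddChar H ℂ) :
    ∑ χ : AddChar G ℂ, ‖charSum f ψ χ‖ ^ 4
      = Fintype.card G * ∑ a, ‖∑ x, ψ (f (x + a) - f x)‖ ^ 2 := by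
  have hS : ∀ χ, ‖charSum f ψ χ‖ ^ 4 = ‖charSum f ψ χ * conj (charSum f ψ χ)‖ ^ 2 := by
    intro χ
    rw [norm_mul, Complex.norm_conj]
    ring
  simp_rw [hS, charSum_mul_conj]
  exact sum_norm_sq_sum_addChar_mul _

variable [DecidableEq G]

theorem DiffOneUniform.sum_norm_sq_sum_addChar_sub {f : G → H} (hf : DiffOneUniform f) (a : G) :
    ∑ ψ : AddChar H ℂ, ‖∑ x, ψ (f (x + a) - f x)‖ ^ 2
      = Fintype.card H * if a = 0 then (Fintype.card G : ℝ) ^ 2 else Fintype.card G := by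
  split_ifs with ha
  · simp [ha]
  · exact sum_norm_sq_sum_addChar_comp_of_injective (hf.injective_sub_comp_add ha)

theorem DiffOneUniform.sum_sum_norm_pow_four_charSum {f : G → H} (hf : DiffOneUniform f) :
    ∑ ψ : AddChar H ℂ, ∑ χ : AddChar G ℂ, ‖charSum f ψ χ‖ ^ 4
      = (Fintype.card G : ℝ) ^ 2 * Fintype.card H * (2 * Fintype.card G - 1) := by
  have hite : ∀ a : G, (if a = 0 then (Fintype.card G : ℝ) ^ 2 else Fintype.card G)
      = Fintype.card G + if a = 0 then (Fintype.card G : ℝ) ^ 2 - Fintype.card G else 0 := by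
    intro a
    split_ifs <;> ring
  simp_rw [sum_norm_pow_four_charSum, ← mul_sum]
  rw [sum_comm]
  simp_rw [hf.sum_norm_sq_sum_addChar_sub, hite, ← mul_sum, sum_add_distrib, sum_ite_eq']
  simp only [sum_const, card_univ, nsmul_eq_mul, mem_univ, ↓reduceIte]
  ring

end DifferentialUniformity

section CharVec

variable {G H : Type*} [AddCommGroup G] [Fintype G] [AddCommGroup H] [Fintype H]

theorem inner_charVec (f : G → H) (ψ ψ' : AddChar H ℂ) (χ χ' : AddChar G ℂ) :
    inner ℂ (charVec f ψ χ) (charVec f ψ' χ') = charSum f (ψ' - ψ) (χ' - χ) / Fintype.card G := by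
  have hsqrt : (Real.sqrt (Fintype.card G) : ℂ) * Real.sqrt (Fintype.card G) = Fintype.card G := by
    rw [← Complex.ofReal_mul, Real.mul_self_sqrt (Nat.cast_nonneg _), Complex.ofReal_natCast]
  rw [PiLp.inner_apply, charSum, sum_div]
  refine sum_congr rfl fun x _ => ?_
  simp only [charVec, WithLp.equiv_symm_apply, RCLike.inner_apply, map_div₀, map_mul,
    Complex.conj_ofReal, AddChar.sub_apply', ← AddChar.inv_apply_eq_conj, ← hsqrt]
  field_simp

theorem orthonormal_charVec (f : G → H) (ψ : AddChar H ℂ) : Orthonormal ℂ (charVec f ψ) := by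
  classical
  rw [orthonormal_iff_ite]
  intro χ χ'
  simp only [inner_charVec, charSum, sub_self, AddChar.zero_apply, mul_one, AddChar.sum_eq_ite,
    sub_eq_zero, eq_comm (a := χ')]
  split_ifs <;> simp

theorem exists_orthonormalBasis_eq_charVec (f : G → H) (ψ : AddChar H ℂ) :
    ∃ b : OrthonormalBasis (AddChar G ℂ) ℂ (EuclideanSpace ℂ G), ∀ χ, b χ = charVec f ψ χ := by
  have hcard : Fintype.card (AddChar G ℂ) = Module.finrank ℂ (EuclideanSpace ℂ G) := by simp
  let b := basisOfOrthonormalOfCardEqFinrank (orthonormal_charVec f ψ) hcard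
  exact ⟨b.toOrthonormalBasis (by simpa [b] using orthonormal_charVec f ψ), by simp [b]⟩

theorem norm_inner_single_charVec [DecidableEq G] (f : G → H) (ψ : AddChar H ℂ)
    (χ : AddChar G ℂ) (x : G) :
    ‖inner ℂ (EuclideanSpace.single x (1 : ℂ)) (charVec f ψ χ)‖ = (√(Fintype.card G))⁻¹ := by
  simp [EuclideanSpace.inner_single_left, charVec, AddChar.norm_apply]

theorem norm_inner_charVec_single [DecidableEq G] (f : G → H) (ψ : AddChar H ℂ)
    (χ : AddChar G ℂ) (x : G) :
    ‖inner ℂ (charVec f ψ χ) (EuclideanSpace.single x (1 : ℂ))‖ = (√(Fintype.card G))⁻¹ := by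
  rw [norm_inner_symm, norm_inner_single_charVec]

theorem sum_norm_pow_four_inner_charVec (f : G → H) :
    ∑ ψ : AddChar H ℂ, ∑ ψ' : AddChar H ℂ, ∑ χ : AddChar G ℂ, ∑ χ' : AddChar G ℂ,
        ‖inner ℂ (charVec f ψ χ) (charVec f ψ' χ')‖ ^ 4
      = Fintype.card H * Fintype.card G * (∑ ψ, ∑ χ, ‖charSum f ψ χ‖ ^ 4) / Fintype.card G ^ 4 := by
  have hχ : ∀ τ : AddChar H ℂ, ∑ χ : AddChar G ℂ, ∑ χ', ‖charSum f τ (χ' - χ)‖ ^ 4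
      = Fintype.card G * ∑ σ, ‖charSum f τ σ‖ ^ 4 := fun τ =>
    (sum_sum_comp_sub fun σ => ‖charSum f τ σ‖ ^ 4).trans (by simp)
  simp_rw [inner_charVec, norm_div, div_pow, Complex.norm_natCast, ← sum_div, hχ]
  rw [sum_sum_comp_sub fun τ => (Fintype.card G : ℝ) * ∑ σ, ‖charSum f τ σ‖ ^ 4, ← mul_sum]
  simp [mul_assoc]

end CharVec

theorem two_design_from_diffOneUniform {G H : Type*}
    [AddCommGroup G] [Fintype G] [DecidableEq G] [AddCommGroup H] [Fintype H]
    (f : G → H) (hf : DiffOneUniform f) :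
    (∀ ψ : AddChar H ℂ, ∃ b : OrthonormalBasis (AddChar G ℂ) ℂ (EuclideanSpace ℂ G),
        ∀ χ, b χ = charVec f ψ χ) ∧
    (let d : ℝ := Fintype.card G
     let w0 : ℝ := (d * (d + 1))⁻¹
     let w1 : ℝ := ((Fintype.card H : ℝ) * (d + 1))⁻¹
     (∑ x : G, ∑ y : G, w0 * w0 *
          ‖(inner ℂ (EuclideanSpace.single x (1 : ℂ)) (EuclideanSpace.single y (1 : ℂ)) : ℂ)‖ ^ 4)
       + (∑ ψ : AddChar H ℂ, ∑ x : G, ∑ χ : AddChar G ℂ,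
          (w0 * w1 * ‖(inner ℂ (EuclideanSpace.single x (1 : ℂ)) (charVec f ψ χ) : ℂ)‖ ^ 4
           + w1 * w0 * ‖(inner ℂ (charVec f ψ χ) (EuclideanSpace.single x (1 : ℂ)) : ℂ)‖ ^ 4))
       + (∑ ψ : AddChar H ℂ, ∑ ψ' : AddChar H ℂ, ∑ χ : AddChar G ℂ, ∑ χ' : AddChar G ℂ,
          w1 * w1 * ‖(inner ℂ (charVec f ψ χ) (charVec f ψ' χ') : ℂ)‖ ^ 4)
       = 2 / (d * (d + 1))) := by
  refine ⟨exists_orthonormalBasis_eq_charVec f, ?_⟩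
  have hsqrt : √(Fintype.card G : ℝ) ^ 4 = (Fintype.card G : ℝ) ^ 2 := by
    rw [show 4 = 2 * 2 from rfl, pow_mul, Real.sq_sqrt (Nat.cast_nonneg _)]
  dsimp only
  simp only [← mul_sum, sum_add_distrib, norm_inner_single_charVec, norm_inner_charVec_single,
    EuclideanSpace.orthonormal_single.sum_sum_norm_inner_pow four_ne_zero,
    sum_norm_pow_four_inner_charVec, hf.sum_sum_norm_pow_four_charSum]
  simp only [mul_inv_rev, inv_pow, hsqrt, sum_const, card_univ, AddChar.card_eq, nsmul_eq_mul]
  field_simp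
  ring
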